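/- arXiv:1501.02220 — 4 statements merged into one kernel-verified Lean document; each statement's English description precedes it below -/
import Mathlib

section
/- Let μ be a finite Borel measure on a metric space X with support X, and suppose there exist countably many Lipschitz maps f_i : A_i → X with A_i ⊆ ℝ such that μ(X \ ⋃ f_i(A_i)) = 0. Then for μ-almost every x ∈ X, liminf_{r→0} μ(B(x,r))/r > 0. -/
open MeasureTheory Metric Filter Set

open scoped NNReal ENNReal

/-!
If the lower density of `μ` vanishes at every point of `f '' E`, where `f` is `K`-Lipschitz on
a bounded set `E ⊆ ℝ`, then for each `ε > 0` every `t ∈ E` has arbitrarily small `δ` with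
`μ (ball (f t) (5 K δ)) ≤ 5 K ε δ`. The Vitali covering lemma selects disjoint intervals
`[t - δ, t + δ]` whose fourfold enlargements cover `E`, so the balls `ball (f t) (5 K δ)` cover
`f '' E`, and `μ (f '' E)` is at most `ε` times a constant multiple of the total length of these
disjoint intervals, which is bounded independently of `ε`. Hence `μ (f '' E) = 0`, and the set
where the lower density vanishes is null, since up to a null set it lies in countably many such
images.
-/

lemma exists_mem_Ioo_measure_ball_le_of_liminf_eq_zero {X : Type*} [PseudoMetricSpace X]
    [MeasurableSpace X] {μ : Measure X} {x : X}
    (h : liminf (fun r : ℝ => μ (ball x r) / ENNReal.ofReal r) (nhdsWithin 0 (Ioi 0)) = 0)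
    {ε : ℝ≥0∞} (hε : 0 < ε) {R : ℝ} (hR : 0 < R) :
    ∃ r ∈ Ioo 0 R, μ (ball x r) ≤ ε * ENNReal.ofReal r := by
  have hfreq : ∃ᶠ r in nhdsWithin (0 : ℝ) (Ioi 0), μ (ball x r) / ENNReal.ofReal r < ε :=
    frequently_lt_of_liminf_lt (h := h ▸ hε)
  obtain ⟨r, hr, hrR⟩ := (hfreq.and_eventually (Ioo_mem_nhdsGT hR)).exists
  refine ⟨r, hrR, ?_⟩
  rw [ENNReal.div_lt_iff (Or.inl (ENNReal.ofReal_pos.2 hrR.1).ne')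
    (Or.inl ENNReal.ofReal_ne_top)] at hr
  exact hr.le

lemma tsum_ofReal_two_mul_le_of_pairwiseDisjoint {u : Set ℝ} {δ : ℝ → ℝ} {R : ℝ}
    (hu : u.PairwiseDisjoint fun b => closedBall b (δ b))
    (hδ : ∀ b ∈ u, 0 < δ b ∧ δ b ≤ 1)
    (huR : u ⊆ ball 0 R) :
    ∑' b : u, ENNReal.ofReal (2 * δ b) ≤ ENNReal.ofReal (2 * (R + 1)) := by
  have hcnt : u.Countable := hu.countable_of_nonempty_interior fun b hb =>
    ⟨b, ball_subset_interior_closedBall (mem_ball_self (hδ b hb).1)⟩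
  calc ∑' b : u, ENNReal.ofReal (2 * δ b)
        = ∑' b : u, volume (closedBall (b : ℝ) (δ b)) := by
        simp only [Real.volume_closedBall]
    _ = volume (⋃ b ∈ u, closedBall b (δ b)) :=
        (measure_biUnion hcnt hu fun b _ => measurableSet_closedBall).symm
    _ ≤ volume (closedBall (0 : ℝ) (R + 1)) := by
        refine measure_mono (iUnion₂_subset fun b hb => closedBall_subset_closedBall' ?_)
        linarith [mem_ball.1 (huR hb), (hδ b hb).2]
    _ = ENNReal.ofReal (2 * (R + 1)) := Real.volume_closedBall _ _

lemma measure_image_le_of_forall_exists_measure_ball_le {X : Type*} [PseudoMetricSpace X]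
    [MeasurableSpace X] (μ : Measure X) {f : ℝ → X} {K : ℝ≥0} (hK : 0 < K)
    {A E : Set ℝ} (hf : LipschitzOnWith K f A) (hEA : E ⊆ A) {R : ℝ} (hER : E ⊆ ball 0 R)
    {ε : ℝ≥0∞} (hE : ∀ t ∈ E, ∀ ρ > 0, ∃ r ∈ Ioo 0 ρ,
      μ (ball (f t) r) ≤ ε * ENNReal.ofReal r) :
    μ (f '' E) ≤ ε * ENNReal.ofReal (5 * K * (R + 1)) := by
  have h5K : (0 : ℝ) < 5 * K := by positivity
  -- `5` rather than `4` so that `K * dist t b ≤ 4 K δ b` lands strictly inside the ball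
  have hδ : ∀ t : ℝ, ∃ δ : ℝ, 0 < δ ∧ δ ≤ 1 ∧
      (t ∈ E → μ (ball (f t) (5 * K * δ)) ≤ ε * ENNReal.ofReal (5 * K * δ)) := by
    intro t
    by_cases ht : t ∈ E
    · obtain ⟨r, ⟨hr0, hr⟩, hμ⟩ := hE t ht _ h5K
      refine ⟨r / (5 * K), div_pos hr0 h5K, (div_le_one h5K).2 hr.le, fun _ => ?_⟩
      rwa [mul_div_cancel₀ r h5K.ne']
    · exact ⟨1, one_pos, le_rfl, fun h => absurd h ht⟩
  choose δ hδpos hδle hδμ using hδ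
  obtain ⟨u, huE, hdisj, hcover⟩ :=
    Vitali.exists_disjoint_subfamily_covering_enlargement_closedBall E id δ 1
      (fun t _ => hδle t) 4 (by norm_num)
  have hcnt : u.Countable := hdisj.countable_of_nonempty_interior fun b _ =>
    ⟨b, ball_subset_interior_closedBall (mem_ball_self (hδpos b))⟩
  have himg : f '' E ⊆ ⋃ b ∈ u, ball (f b) (5 * K * δ b) := by
    rintro _ ⟨t, ht, rfl⟩
    obtain ⟨b, hbu, hsub⟩ := hcover t ht
    have htb : dist t b ≤ 4 * δ b := hsub (mem_closedBall_self (hδpos t).le)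
    have hft : dist (f t) (f b) ≤ K * dist t b := hf.dist_le_mul t (hEA ht) b (hEA (huE hbu))
    refine mem_biUnion hbu (mem_ball.2 ?_)
    nlinarith [hδpos b, mul_pos (NNReal.coe_pos.2 hK) (hδpos b)]
  calc μ (f '' E) ≤ ∑' b : u, μ (ball (f b) (5 * K * δ b)) :=
        (measure_mono himg).trans (measure_biUnion_le μ hcnt _)
    _ ≤ ∑' b : u, ε * ENNReal.ofReal (5 * K / 2) * ENNReal.ofReal (2 * δ b) := by
        refine ENNReal.tsum_le_tsum fun b => (hδμ b (huE b.2)).trans_eq ?_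
        rw [mul_assoc ε, ← ENNReal.ofReal_mul (by positivity)]
        ring_nf
    _ = ε * ENNReal.ofReal (5 * K / 2) * ∑' b : u, ENNReal.ofReal (2 * δ b) :=
        ENNReal.tsum_mul_left
    _ ≤ ε * ENNReal.ofReal (5 * K / 2) * ENNReal.ofReal (2 * (R + 1)) := by
        gcongr
        exact tsum_ofReal_two_mul_le_of_pairwiseDisjoint hdisj
          (fun b hb => ⟨hδpos b, hδle b⟩) (huE.trans hER)
    _ = ε * ENNReal.ofReal (5 * K * (R + 1)) := by
        rw [mul_assoc ε, ← ENNReal.ofReal_mul (by positivity)]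
        ring_nf

lemma measure_image_eq_zero_of_liminf_eq_zero {X : Type*} [PseudoMetricSpace X]
    [MeasurableSpace X] (μ : Measure X) {f : ℝ → X} {K : ℝ≥0} {A E : Set ℝ}
    (hf : LipschitzOnWith K f A) (hEA : E ⊆ A)
    (hE : ∀ t ∈ E,
      liminf (fun r : ℝ => μ (ball (f t) r) / ENNReal.ofReal r) (nhdsWithin 0 (Ioi 0)) = 0) :
    μ (f '' E) = 0 := by
  have hf' : LipschitzOnWith (K + 1) f A := hf.weaken le_self_add
  have hbounded : ∀ n : ℕ, μ (f '' (E ∩ ball 0 n)) = 0 := by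
    intro n
    have hle : ∀ ε > 0,
        μ (f '' (E ∩ ball 0 n)) ≤ ε * ENNReal.ofReal (5 * ↑(K + 1) * (n + 1)) :=
      fun ε hε => measure_image_le_of_forall_exists_measure_ball_le μ (by positivity) hf'
        (inter_subset_left.trans hEA) inter_subset_right fun t ht ρ hρ =>
          exists_mem_Ioo_measure_ball_le_of_liminf_eq_zero (hE t ht.1) hε hρ
    have hlim : Tendsto (fun ε => ε * ENNReal.ofReal (5 * ↑(K + 1) * (n + 1)))
        (nhdsWithin 0 (Ioi 0)) (nhds 0) := by
      simpa using (ENNReal.Tendsto.mul_const (tendsto_id (x := nhds 0))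
        (Or.inr ENNReal.ofReal_ne_top)).mono_left nhdsWithin_le_nhds
    exact nonpos_iff_eq_zero.1 (ge_of_tendsto hlim (eventually_nhdsWithin_of_forall hle))
  have hunion : f '' E = ⋃ n : ℕ, f '' (E ∩ ball 0 n) := by
    rw [← image_iUnion, ← inter_iUnion, iUnion_ball_nat, inter_univ]
  rw [hunion]
  exact measure_iUnion_null hbounded

theorem stmt_0_general {X : Type*} [MetricSpace X] [MeasurableSpace X]
    (μ : Measure X)
    (f : ℕ → ℝ → X) (A : ℕ → Set ℝ) (L : ℕ → NNReal)
    (hf : ∀ i, LipschitzOnWith (L i) (f i) (A i))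
    (hcov : μ (univ \ ⋃ i, f i '' A i) = 0) :
    ∀ᵐ x ∂μ,
      0 < liminf (fun r : ℝ => μ (ball x r) / ENNReal.ofReal r) (nhdsWithin 0 (Ioi 0)) := by
  set Z := {x : X | ¬ 0 < liminf (fun r : ℝ => μ (ball x r) / ENNReal.ofReal r)
    (nhdsWithin 0 (Ioi 0))}
  have hZ : Z ⊆ (univ \ ⋃ i, f i '' A i) ∪ ⋃ i, f i '' {t ∈ A i | f i t ∈ Z} := by
    intro x hx
    by_cases hxU : x ∈ ⋃ i, f i '' A i
    · obtain ⟨i, t, ht, rfl⟩ := mem_iUnion.1 hxU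
      exact Or.inr (mem_iUnion.2 ⟨i, t, ⟨ht, hx⟩, rfl⟩)
    · exact Or.inl ⟨trivial, hxU⟩
  rw [ae_iff]
  refine measure_mono_null hZ (measure_union_null hcov (measure_iUnion_null fun i => ?_))
  exact measure_image_eq_zero_of_liminf_eq_zero μ (hf i) (fun t ht => ht.1)
    fun t ht => nonpos_iff_eq_zero.1 (not_lt.1 ht.2)

/-- If a finite Borel measure on a metric space with full support is 1-rectifiable
(covered a.e. by countably many Lipschitz images of subsets of ℝ), then its lower
1-density is positive almost everywhere. -/
theorem stmt_0 {X : Type*} [MetricSpace X] [MeasurableSpace X] [BorelSpace X]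
    (μ : Measure X) [IsFiniteMeasure μ]
    (hsupp : ∀ (x : X) (r : ℝ), 0 < r → 0 < μ (ball x r))
    (f : ℕ → ℝ → X) (A : ℕ → Set ℝ) (L : ℕ → NNReal)
    (hf : ∀ i, LipschitzOnWith (L i) (f i) (A i))
    (hcov : μ (univ \ ⋃ i, f i '' A i) = 0) :
    ∀ᵐ x ∂μ,
      0 < liminf (fun r : ℝ => μ (ball x r) / ENNReal.ofReal r) (nhdsWithin 0 (Ioi 0)) :=
  stmt_0_general μ f A L hf hcov
end

section
/- Let X be a compact connected metric space with H¹(X) < ∞. Then there exists a Lipschitz surjection f : [0,1] → X. -/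
/-!
Cover `X` by a maximal `ε`-separated set `S`. Since `X` is connected, the graph on `S` joining
points at distance `≤ 2ε` is connected, so a closed walk of length `2 (|S| - 1)` visits all of
`S` (add the vertices one at a time, each as a back-and-forth detour from a neighbour). The
closed balls of radius `ε / 2` around `S` are disjoint and, again by connectedness, each has
`H¹`-measure at least `ε / 2`; hence the walk has total length at most `8 H¹(X)`, independently
of `ε`. Running through it at constant speed gives maps `[0,1] → X` that are `8 H¹(X)`-Lipschitz
up to an error `O(ε)` and are `O(ε)`-dense; a pointwise limit along an ultrafilter (Tychonoff)
is a Lipschitz surjection.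
-/

open MeasureTheory Metric Filter Set
open scoped ENNReal NNReal Topology

namespace SimpleGraph

theorem exists_closed_walk_covering {V : Type*} (G : SimpleGraph V) {S : Finset V}
    (hS : S.Nonempty)
    (hcut : ∀ T ⊆ S, T.Nonempty → T ≠ S → ∃ v ∈ T, ∃ u ∈ S, u ∉ T ∧ G.Adj v u) :
    ∃ (v : V) (w : G.Walk v v), (∀ x ∈ S, x ∈ w.support) ∧ w.length = 2 * (S.card - 1) := by
  classical
  suffices h : ∀ k < S.card, ∃ T ⊆ S, T.card = k + 1 ∧
      ∃ (v : V) (w : G.Walk v v), (∀ x ∈ T, x ∈ w.support) ∧ w.length = 2 * k by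
    obtain ⟨T, hTS, hT, v, w, hw, hlen⟩ := h (S.card - 1) (by have := hS.card_pos; omega)
    obtain rfl : T = S := Finset.eq_of_subset_of_card_le hTS (by omega)
    exact ⟨v, w, hw, hlen⟩
  intro k
  induction k with
  | zero =>
    obtain ⟨a, ha⟩ := hS
    exact fun _ => ⟨{a}, by simpa, rfl, a, .nil, by simp, rfl⟩
  | succ k ih =>
    intro hk
    obtain ⟨T, hTS, hT, v₀, w, hw, hlen⟩ := ih (by omega)
    obtain ⟨v, hvT, u, huS, huT, hvu⟩ :=
      hcut T hTS (Finset.card_pos.mp (by omega)) (by rintro rfl; omega)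
    refine ⟨insert u T, Finset.insert_subset huS hTS, by rw [Finset.card_insert_of_notMem huT, hT],
      v, .cons hvu (.cons hvu.symm (w.rotate v (hw v hvT))), ?_, by simp [hlen]; ring⟩
    simp only [Finset.mem_insert, Walk.support_cons, List.mem_cons, Walk.mem_support_rotate_iff]
    rintro x (rfl | hx)
    · simp
    · simp [hw x hx]

end SimpleGraph

theorem exists_mem_Icc_floor_mul_eq {i M : ℕ} (h : i ≤ M) :
    ∃ t ∈ Icc (0 : ℝ) 1, ⌊t * M⌋₊ = i := by
  rcases M.eq_zero_or_pos with rfl | hM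
  · exact ⟨0, by simp, by simp [Nat.le_zero.mp h]⟩
  refine ⟨i / M, ⟨by positivity, div_le_one_of_le₀ (by exact_mod_cast h) (by positivity)⟩, ?_⟩
  rw [div_mul_cancel₀ _ (by positivity), Nat.floor_natCast]

theorem dist_floor_mul_le {X : Type*} [PseudoMetricSpace X] {p : ℕ → X} {M : ℕ} {δ : ℝ}
    (hδ : 0 ≤ δ) (hp : ∀ i < M, dist (p i) (p (i + 1)) ≤ δ) {s t : ℝ}
    (hs : s ∈ Icc (0 : ℝ) 1) (ht : t ∈ Icc (0 : ℝ) 1) :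
    dist (p ⌊s * M⌋₊) (p ⌊t * M⌋₊) ≤ δ * M * dist s t + δ := by
  wlog hst : s ≤ t generalizing s t
  · rw [dist_comm, dist_comm s]; exact this ht hs (le_of_not_ge hst)
  have hij : ⌊s * M⌋₊ ≤ ⌊t * M⌋₊ := Nat.floor_mono (by gcongr)
  have hjM : ⌊t * M⌋₊ ≤ M := Nat.floor_le_of_le (by nlinarith [ht.2, M.cast_nonneg (α := ℝ)])
  have hgap : (⌊t * M⌋₊ : ℝ) - ⌊s * M⌋₊ ≤ M * (t - s) + 1 := by
    have := Nat.floor_le (by nlinarith [ht.1, M.cast_nonneg (α := ℝ)] : 0 ≤ t * M)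
    have := Nat.lt_floor_add_one (s * M)
    linarith
  calc dist (p ⌊s * M⌋₊) (p ⌊t * M⌋₊) ≤ ∑ _i ∈ Finset.Ico ⌊s * M⌋₊ ⌊t * M⌋₊, δ :=
        dist_le_Ico_sum_of_dist_le hij fun _ hi => hp _ (by omega)
    _ = (⌊t * M⌋₊ - ⌊s * M⌋₊) * δ := by simp [Nat.cast_sub hij]
    _ ≤ (M * (t - s) + 1) * δ := by gcongr
    _ = δ * M * dist s t + δ := by rw [Real.dist_eq, abs_of_nonpos (by linarith)]; ring

namespace Metric

variable {X : Type*}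

def proximityGraph [PseudoMetricSpace X] (r : ℝ) : SimpleGraph X where
  Adj x y := x ≠ y ∧ dist x y ≤ r
  symm := ⟨fun x y h => ⟨h.1.symm, dist_comm x y ▸ h.2⟩⟩
  loopless := ⟨fun _ h => h.1 rfl⟩

theorem exists_dist_le_two_mul_of_cover [PseudoMetricSpace X] [ConnectedSpace X] {S T : Finset X}
    {r : ℝ} (hcov : ∀ x, ∃ s ∈ S, dist x s ≤ r) (hTS : T ⊆ S) (hT : T.Nonempty) (hTS' : T ≠ S) :
    ∃ v ∈ T, ∃ u ∈ S, u ∉ T ∧ dist v u ≤ 2 * r := by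
  classical
  obtain ⟨t, ht⟩ := hT
  obtain ⟨u₀, hu₀S, hu₀T⟩ : ∃ u ∈ S, u ∉ T := by
    by_contra! h
    exact hTS' (hTS.antisymm h)
  have hr : 0 ≤ r := by obtain ⟨s, -, hs⟩ := hcov t; exact dist_nonneg.trans hs
  obtain ⟨z, -, hzT, hzT'⟩ := isPreconnected_closed_iff.mp isPreconnected_univ
    (⋃ v ∈ T, closedBall v r) (⋃ u ∈ S \ T, closedBall u r)
    (isClosed_biUnion_finset fun _ _ => isClosed_closedBall)
    (isClosed_biUnion_finset fun _ _ => isClosed_closedBall)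
    (fun x _ => by
      obtain ⟨s, hs, hxs⟩ := hcov x
      by_cases hsT : s ∈ T
      · exact Or.inl (mem_biUnion hsT hxs)
      · exact Or.inr (mem_biUnion (Finset.mem_sdiff.mpr ⟨hs, hsT⟩) hxs))
    ⟨t, trivial, mem_biUnion ht (mem_closedBall_self hr)⟩
    ⟨u₀, trivial, mem_biUnion (Finset.mem_sdiff.mpr ⟨hu₀S, hu₀T⟩) (mem_closedBall_self hr)⟩
  obtain ⟨v, hv, hzv⟩ := mem_iUnion₂.mp hzT
  obtain ⟨u, hu, hzu⟩ := mem_iUnion₂.mp hzT'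
  obtain ⟨huS, huT⟩ := Finset.mem_sdiff.mp hu
  refine ⟨v, hv, u, huS, huT, ?_⟩
  calc dist v u ≤ dist z v + dist z u := dist_triangle_left _ _ _
    _ ≤ 2 * r := by rw [mem_closedBall] at hzv hzu; linarith

theorem ofReal_le_hausdorffMeasure_closedBall [MetricSpace X] [MeasurableSpace X] [BorelSpace X]
    [ConnectedSpace X] {x y : X} {r : ℝ} (hr : r ≤ dist x y) :
    ENNReal.ofReal r ≤ μH[1] (closedBall x r) := by
  have hIcc : Icc 0 r ⊆ dist x '' closedBall x r := by
    intro s hs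
    obtain ⟨z, -, hz⟩ := (isPreconnected_univ.image (dist x) (continuous_const.dist
      continuous_id).continuousOn).Icc_subset (mem_image_of_mem _ (mem_univ x))
      (mem_image_of_mem _ (mem_univ y)) (by simpa using ⟨hs.1, hs.2.trans hr⟩)
    exact ⟨z, by rw [mem_closedBall, dist_comm, hz]; exact hs.2, hz⟩
  calc ENNReal.ofReal r = μH[1] (Icc 0 r) := by
        rw [hausdorffMeasure_real, Real.volume_Icc, sub_zero]
    _ ≤ μH[1] (dist x '' closedBall x r) := measure_mono hIcc
    _ ≤ μH[1] (closedBall x r) := by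
        simpa using (LipschitzWith.dist_right x).hausdorffMeasure_image_le zero_le_one
          (closedBall x r)

theorem IsSeparated.card_sub_one_mul_le_hausdorffMeasure [MetricSpace X] [MeasurableSpace X]
    [BorelSpace X] [ConnectedSpace X] {ε : ℝ≥0} {S : Finset X} (hS : IsSeparated ε (S : Set X)) :
    ((S.card - 1 : ℕ) : ℝ≥0∞) * ε ≤ 2 * μH[1] (univ : Set X) := by
  rcases le_or_gt S.card 1 with h | h
  · simp [Nat.sub_eq_zero_of_le h]
  have hsep : ∀ x ∈ S, ∀ y ∈ S, x ≠ y → (ε : ℝ) < dist x y := fun x hx y hy hxy => by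
    have : (ε : ℝ≥0∞) < edist x y := hS hx hy hxy
    rwa [edist_dist, ← ENNReal.ofReal_coe_nnreal,
      ENNReal.ofReal_lt_ofReal_iff_of_nonneg ε.coe_nonneg] at this
  have hball : ∀ x ∈ S, ENNReal.ofReal (ε / 2) ≤ μH[1] (closedBall x (ε / 2)) := by
    intro x hx
    obtain ⟨y, hy, hyx⟩ := S.exists_mem_ne h x
    exact ofReal_le_hausdorffMeasure_closedBall (y := y)
      (by linarith [hsep x hx y hy hyx.symm, ε.coe_nonneg])
  have hdisj : (S : Set X).PairwiseDisjoint fun x => closedBall x (ε / 2) :=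
    fun x hx y hy hxy => closedBall_disjoint_closedBall (by linarith [hsep x hx y hy hxy])
  calc ((S.card - 1 : ℕ) : ℝ≥0∞) * ε ≤ S.card * ε := by gcongr; exact Nat.sub_le _ _
    _ = 2 * ∑ _x ∈ S, ENNReal.ofReal (ε / 2) := by
        rw [Finset.sum_const, nsmul_eq_mul, ENNReal.ofReal_div_of_pos two_pos,
          ENNReal.ofReal_coe_nnreal, ENNReal.ofReal_ofNat, mul_left_comm,
          ENNReal.mul_div_cancel two_ne_zero ENNReal.ofNat_ne_top]
    _ ≤ 2 * ∑ x ∈ S, μH[1] (closedBall x (ε / 2)) := by gcongr with x hx; exact hball x hx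
    _ = 2 * μH[1] (⋃ x ∈ S, closedBall x (ε / 2)) := by
        rw [measure_biUnion_finset hdisj fun _ _ => measurableSet_closedBall]
    _ ≤ 2 * μH[1] (univ : Set X) := by gcongr; exact subset_univ _

theorem exists_finset_isSeparated_isCover [PseudoEMetricSpace X] [CompactSpace X] {ε : ℝ≥0}
    (hε : ε ≠ 0) : ∃ S : Finset X, IsSeparated ε (S : Set X) ∧ IsCover ε univ (S : Set X) := by
  have hpack : packingNumber ε (univ : Set X) ≠ ⊤ := by
    obtain ⟨N, -, hNfin, hN⟩ := exists_finite_isCover_of_isCompact (ε := ε / 2)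
      (by simpa using hε) (isCompact_univ : IsCompact (univ : Set X))
    refine ne_top_of_le_ne_top hNfin.encard_lt_top.ne ?_
    calc packingNumber ε univ = packingNumber (2 * (ε / 2)) univ := by
          rw [mul_div_cancel₀ _ two_ne_zero]
      _ ≤ externalCoveringNumber (ε / 2) univ :=
          packingNumber_two_mul_le_externalCoveringNumber _ _
      _ ≤ N.encard := hN.externalCoveringNumber_le_encard
  have hfin : (maximalSeparatedSet ε (univ : Set X)).Finite :=
    Set.encard_ne_top_iff.mp (by rwa [encard_maximalSeparatedSet hpack])
  exact ⟨hfin.toFinset, by simpa using isSeparated_maximalSeparatedSet,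
    by simpa using isCover_maximalSeparatedSet hpack⟩

theorem exists_approx_lipschitz_dense [MetricSpace X] [MeasurableSpace X] [BorelSpace X]
    [CompactSpace X] [ConnectedSpace X] (hlen : μH[1] (univ : Set X) ≠ ⊤) {ε : ℝ} (hε : 0 < ε) :
    ∃ f : ℝ → X, (∀ s ∈ Icc (0 : ℝ) 1, ∀ t ∈ Icc (0 : ℝ) 1,
        dist (f s) (f t) ≤ (8 * (μH[1] (univ : Set X)).toNNReal : ℝ≥0) * dist s t + ε) ∧
      ∀ x, ∃ t ∈ Icc (0 : ℝ) 1, dist x (f t) ≤ ε := by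
  obtain ⟨r, hr⟩ : ∃ r : ℝ≥0, (r : ℝ) = ε / 2 := ⟨⟨ε / 2, by positivity⟩, rfl⟩
  obtain ⟨S, hsep, hcov⟩ := exists_finset_isSeparated_isCover (X := X)
    (NNReal.coe_pos.mp (hr ▸ half_pos hε)).ne'
  have hcov' : ∀ x, ∃ s ∈ S, dist x s ≤ ε / 2 := fun x => by
    simpa [← NNReal.coe_le_coe, hr] using
      isCover_iff_subset_iUnion_closedBall.mp hcov (mem_univ x)
  have hS : S.Nonempty := by
    obtain ⟨s, hs, -⟩ := hcov' (Classical.arbitrary X)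
    exact ⟨s, hs⟩
  obtain ⟨v, w, hwS, hwlen⟩ := (proximityGraph (X := X) ε).exists_closed_walk_covering hS
    fun T hTS hT hTS' => by
      obtain ⟨v, hv, u, hu, huT, hvu⟩ := exists_dist_le_two_mul_of_cover hcov' hTS hT hTS'
      exact ⟨v, hv, u, hu, huT, ne_of_mem_of_not_mem hv huT, by linarith⟩
  have hcard := ENNReal.toReal_mono (ENNReal.mul_ne_top (by simp) hlen)
    hsep.card_sub_one_mul_le_hausdorffMeasure
  simp only [ENNReal.toReal_mul, ENNReal.toReal_natCast, ENNReal.coe_toReal, hr,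
    ENNReal.toReal_ofNat] at hcard
  refine ⟨fun t => w.getVert ⌊t * w.length⌋₊, fun s hs t ht => ?_, fun x => ?_⟩
  · calc _ ≤ ε * w.length * dist s t + ε :=
          dist_floor_mul_le hε.le (fun i hi => (w.adj_getVert_succ hi).2) hs ht
      _ ≤ _ := by
          gcongr
          rw [hwlen]; push_cast [ENNReal.coe_toNNReal hlen]; linarith
  · obtain ⟨s, hs, hxs⟩ := hcov' x
    obtain ⟨i, rfl, hi⟩ := SimpleGraph.Walk.mem_support_iff_exists_getVert.mp (hwS s hs)
    obtain ⟨t, ht, hti⟩ := exists_mem_Icc_floor_mul_eq hi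
    exact ⟨t, ht, by simp only [hti]; linarith⟩

end Metric

theorem exists_lipschitzOnWith_image_eq_univ_of_approx {Y X : Type*} [PseudoMetricSpace Y]
    [MetricSpace X] [CompactSpace X] {D : Set Y} (hD : IsCompact D) {K : ℝ≥0}
    (happrox : ∀ ε > 0, ∃ f : Y → X, (∀ s ∈ D, ∀ t ∈ D, dist (f s) (f t) ≤ K * dist s t + ε) ∧
      ∀ x, ∃ t ∈ D, dist x (f t) ≤ ε) :
    ∃ f : Y → X, LipschitzOnWith K f D ∧ f '' D = univ := by
  choose F hF hdense using fun n : ℕ => happrox (1 / (n + 1)) Nat.one_div_pos_of_nat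
  set e : ℕ → ℝ := fun n => 1 / (n + 1)
  set U := Ultrafilter.of (atTop : Filter ℕ)
  have he : Tendsto e U (𝓝 0) :=
    tendsto_one_div_add_atTop_nhds_zero_nat.mono_left (Ultrafilter.of_le _)
  obtain ⟨f, -, hFf⟩ := isCompact_univ.ultrafilter_le_nhds (U.map F) (by simp)
  have hf : ∀ t, Tendsto (fun n => F n t) U (𝓝 (f t)) := tendsto_pi_nhds.mp hFf
  refine ⟨f, LipschitzOnWith.of_dist_le_mul fun s hs t ht => ?_, eq_univ_of_forall fun x => ?_⟩
  · simpa using le_of_tendsto_of_tendsto' ((hf s).dist (hf t)) (tendsto_const_nhds.add he)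
      fun n => hF n s hs t ht
  choose t htD hxt using fun n => hdense n x
  obtain ⟨t₀, ht₀D, ht₀⟩ := hD.ultrafilter_le_nhds (U.map t)
    (le_principal_iff.mpr (mem_map.mpr (univ_mem' htD)))
  refine ⟨t₀, ht₀D, dist_le_zero.mp ?_⟩
  have hbound : ∀ n, dist (f t₀) x ≤ dist (f t₀) (F n t₀) + (K * dist t₀ (t n) + e n) + e n :=
    fun n => calc
      dist (f t₀) x ≤ dist (f t₀) (F n t₀) + dist (F n t₀) (F n (t n)) + dist (F n (t n)) x :=
        dist_triangle4 _ _ _ _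
      _ ≤ _ := by
        gcongr
        · exact hF n _ ht₀D _ (htD n)
        · rw [dist_comm]; exact hxt n
  have hlim :
      Tendsto (fun n => dist (f t₀) (F n t₀) + (K * dist t₀ (t n) + e n) + e n) U (𝓝 0) := by
    simpa using (((tendsto_const_nhds (x := f t₀)).dist (hf t₀)).add
      (((tendsto_const_nhds (x := (K : ℝ))).mul ((tendsto_const_nhds (x := t₀)).dist ht₀)).add
        he)).add he
  exact ge_of_tendsto hlim (Eventually.of_forall hbound)

/-- A compact connected metric space of finite one-dimensional Hausdorff measure is
the image of a Lipschitz map from [0,1]. -/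
theorem stmt_4 {X : Type*} [MetricSpace X] [MeasurableSpace X] [BorelSpace X]
    [CompactSpace X] [ConnectedSpace X]
    (hlen : μH[1] (univ : Set X) < ⊤) :
    ∃ (L : NNReal) (f : ℝ → X),
      LipschitzOnWith L f (Icc 0 1) ∧ f '' (Icc 0 1) = univ := by
  obtain ⟨f, hf, himg⟩ := exists_lipschitzOnWith_image_eq_univ_of_approx isCompact_Icc
    fun ε hε => Metric.exists_approx_lipschitz_dense hlen.ne hε
  exact ⟨_, f, hf, himg⟩
end

section
/- Let X be a connected metric space, x ∈ X, and 0 < r ≤ diam X. Then H¹(X ∩ B(x,r)) ≥ r, where H¹ is the one-dimensional Hausdorff measure on X. -/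
open MeasureTheory Metric Filter Set

/-- In a connected metric space, any ball of radius 0 < r ≤ diam X has
one-dimensional Hausdorff measure at least r. -/
theorem stmt_8 {X : Type*} [MetricSpace X] [MeasurableSpace X] [BorelSpace X]
    [ConnectedSpace X]
    (x : X) (r : ℝ) (hr : 0 < r)
    (hrd : ENNReal.ofReal r ≤ EMetric.diam (univ : Set X)) :
    ENNReal.ofReal r ≤ μH[1] (ball x r) := by
  have key : ∀ t : ℝ, 0 ≤ t → t < r → ENNReal.ofReal t ≤ μH[1] (ball x r) := by
    intro t ht htr
    by_cases hcase : ∃ y : X, r ≤ dist x y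
    · obtain ⟨y, hy⟩ := hcase
      have hf : Continuous (dist x) := LipschitzWith.continuous (LipschitzWith.dist_right x)
      have hI : Icc (0 : ℝ) t ⊆ (dist x) '' (ball x r) := by
        intro s hs
        have hmem : s ∈ Icc (dist x x) (dist x y) := by
          rw [dist_self]
          exact ⟨hs.1, hs.2.trans (htr.le.trans hy)⟩
        obtain ⟨z, hz⟩ := intermediate_value_univ x y hf hmem
        exact ⟨z, by rw [mem_ball, dist_comm, hz]; exact lt_of_le_of_lt hs.2 htr, hz⟩
      calc ENNReal.ofReal t = μH[1] (Icc (0 : ℝ) t) := by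
              rw [MeasureTheory.hausdorffMeasure_real, Real.volume_Icc]; simp
        _ ≤ μH[1] ((dist x) '' (ball x r)) := measure_mono hI
        _ ≤ μH[1] (ball x r) := by
              simpa using (LipschitzWith.dist_right x).hausdorffMeasure_image_le (d := 1)
                (by norm_num) (ball x r)
    · push_neg at hcase
      have hball : ball x r = univ := eq_univ_of_forall fun y => mem_ball'.2 (hcase y)
      obtain ⟨a, b, hab⟩ : ∃ a b : X, t < dist a b := by
        by_contra h
        push_neg at h
        have hle : EMetric.diam (univ : Set X) ≤ ENNReal.ofReal t :=
          EMetric.diam_le fun p _ q _ => by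
            rw [edist_dist]; exact ENNReal.ofReal_le_ofReal (h p q)
        have : ENNReal.ofReal r ≤ ENNReal.ofReal t := hrd.trans hle
        exact absurd ((ENNReal.ofReal_le_ofReal_iff ht).1 this) (not_le.2 htr)
      have hf : Continuous (dist a) := LipschitzWith.continuous (LipschitzWith.dist_right a)
      have hI : Icc (0 : ℝ) t ⊆ (dist a) '' (ball x r) := by
        rw [hball, image_univ]
        intro s hs
        have hmem : s ∈ Icc (dist a a) (dist a b) := by
          rw [dist_self]
          exact ⟨hs.1, hs.2.trans hab.le⟩
        exact intermediate_value_univ a b hf hmem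
      calc ENNReal.ofReal t = μH[1] (Icc (0 : ℝ) t) := by
              rw [MeasureTheory.hausdorffMeasure_real, Real.volume_Icc]; simp
        _ ≤ μH[1] ((dist a) '' (ball x r)) := measure_mono hI
        _ ≤ μH[1] (ball x r) := by
              simpa using (LipschitzWith.dist_right a).hausdorffMeasure_image_le (d := 1)
                (by norm_num) (ball x r)
  refine le_of_forall_lt_imp_le_of_dense fun c hc => ?_
  have hcne : c ≠ ⊤ := hc.ne_top
  have hct : c.toReal < r := by
    rw [← ENNReal.ofReal_toReal hcne] at hc
    exact lt_of_not_ge fun h => absurd (ENNReal.ofReal_le_ofReal h) (not_le.2 hc)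
  calc c = ENNReal.ofReal c.toReal := (ENNReal.ofReal_toReal hcne).symm
    _ ≤ μH[1] (ball x r) := key _ ENNReal.toReal_nonneg hct
end

section
/- Let E ⊆ X be a compact subset of a metric space, and suppose Γ = E ∪ ⋃_{j∈J} K_j where each K_j is a compact connected set with K_j ∩ E ≠ ∅ (i.e., each K_j meets E), and for every ε > 0 only finitely many K_j have diameter ≥ ε. Then Γ is compact. -/
open Metric Set

/-!
Finitely many sets of an open cover cover the compact set `E`, hence also a uniform
`δ`-neighbourhood of `E`. Every `K j` of diameter `< δ` meets `E` and so lies in that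
neighbourhood; only finitely many `K j` remain, and their union is compact.
-/

theorem isCompact_of_forall_isOpen_superset {X : Type*} [TopologicalSpace X] {s E : Set X}
    (hE : IsCompact E) (hEs : E ⊆ s)
    (h : ∀ V, IsOpen V → E ⊆ V → ∃ C ⊆ s, IsCompact C ∧ s ⊆ V ∪ C) : IsCompact s := by
  classical
  refine isCompact_of_finite_subcover fun U hUo hsU => ?_
  obtain ⟨t, ht⟩ := hE.elim_finite_subcover U hUo (hEs.trans hsU)
  obtain ⟨C, hCs, hC, hsVC⟩ := h _ (isOpen_biUnion fun i _ => hUo i) ht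
  obtain ⟨t', ht'⟩ := hC.elim_finite_subcover U hUo (hCs.trans hsU)
  refine ⟨t ∪ t', hsVC.trans ?_⟩
  rw [Finset.set_biUnion_union]
  exact union_subset_union_right _ ht'

theorem subset_thickening_of_diam_lt {X : Type*} [PseudoMetricSpace X] {K E : Set X} {δ : ℝ}
    (hK : Bornology.IsBounded K) (hKE : (K ∩ E).Nonempty) (hδ : diam K < δ) :
    K ⊆ thickening δ E := by
  obtain ⟨e, heK, heE⟩ := hKE
  exact fun x hx => mem_thickening_iff.2 ⟨e, heE, (dist_le_diam_of_mem hK hx heK).trans_lt hδ⟩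

theorem stmt_13_general {X : Type*} [MetricSpace X] {J : Type*}
    (E : Set X) (hE : IsCompact E) (K : J → Set X)
    (hKcomp : ∀ j, IsCompact (K j))
    (hKE : ∀ j, (K j ∩ E).Nonempty)
    (hfin : ∀ ε : ℝ, 0 < ε → {j | ε ≤ Metric.diam (K j)}.Finite) :
    IsCompact (E ∪ ⋃ j, K j) := by
  refine isCompact_of_forall_isOpen_superset hE subset_union_left fun V hV hEV => ?_
  obtain ⟨δ, hδ, hδV⟩ := hE.exists_thickening_subset_open hV hEV
  refine ⟨⋃ j ∈ {j | δ ≤ diam (K j)}, K j, (iUnion₂_subset_iUnion _ K).trans subset_union_right,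
    (hfin δ hδ).isCompact_biUnion fun j _ => hKcomp j,
    union_subset (hEV.trans subset_union_left) (iUnion_subset fun j => ?_)⟩
  by_cases hj : δ ≤ diam (K j)
  · exact (subset_biUnion_of_mem (u := K) hj).trans subset_union_right
  · exact ((subset_thickening_of_diam_lt (hKcomp j).isBounded (hKE j) (not_le.1 hj)).trans
      hδV).trans subset_union_left

/-- If E is compact and Γ = E ∪ ⋃ⱼ Kⱼ where the Kⱼ are compact connected sets
meeting E such that for every ε > 0 only finitely many Kⱼ have diameter ≥ ε,
then Γ is compact. -/
theorem stmt_13 {X : Type*} [MetricSpace X] {J : Type*} [Countable J]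
    (E : Set X) (hE : IsCompact E) (K : J → Set X)
    (hKcomp : ∀ j, IsCompact (K j)) (hKconn : ∀ j, IsConnected (K j))
    (hKE : ∀ j, (K j ∩ E).Nonempty)
    (hfin : ∀ ε : ℝ, 0 < ε → {j | ε ≤ Metric.diam (K j)}.Finite) :
    IsCompact (E ∪ ⋃ j, K j) :=
  stmt_13_general E hE K hKcomp hKE hfin
end
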